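/- arXiv:1603.05738 — 6 statements merged into one kernel-verified Lean document; each statement's English description precedes it below -/
import Mathlib

section
/- (Key recursion (26), proof of Theorem 1) Suppose the nonnegative tolerance sequence {η_k} is summable, and assume that for every λ ∈ ℝᵐ the AL subproblem min_x L_β(x;λ) has an exact solution. Then for every k ≥ 1: δ_{k+1} ≤ δ_k − θδ_k² + (3/2)η_k, where δ_k := d(λ*) − d(λ^k), B := √(‖λ¹ − λ*‖² + 2β Σ_{k=1}^∞ η_k), and θ := β/(4B²). -/
open RealInnerProductSpace

/-!
Write `r = A x⁺ - b` for the residual of an `η`-approximate solution `x⁺` at `λ`, and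
`λ⁺ = λ + β r`. The approximate optimality condition and the gradient inequality for `f` give
`L(x⁺; λ) + (β/2)‖A x⁺ - A y‖² ≤ L(y; λ) + η` for every `y`. As
`L(y; λ⁺) = L(y; λ) + β⟪r, A y - b⟫`, this yields the dual ascent
`d(λ⁺) ≥ d(λ) + (β/2)‖r‖² - η`; as `L(x⁺; ·)` is affine and lies above `d`, it also yields the
approximate supergradient inequality `d(μ) ≤ d(λ) + η + ⟪μ - λ, r⟫`. Chaining
`L(x⁺; λ) + (β/2)‖r‖² - η ≤ d(λ⁺) ≤ d(λ*) ≤ L(x⁺; λ*)` gives `⟪λ* - λ, r⟫ ≥ (β/2)‖r‖² - η`, i.e.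
quasi-Fejér monotonicity `‖λ⁺ - λ*‖² ≤ ‖λ - λ*‖² + 2βη`, so every multiplier
stays within distance `B` of `λ*` and `δ_k ≤ B‖r‖ + η_k`. Eliminating `‖r‖` between this bound and
the descent `δ_{k+1} ≤ δ_k - (β/2)‖r‖² + η_k` gives the recursion.
-/

theorem ConvexOn.add_inner_sub_le_of_hasGradientAt {E : Type*} [NormedAddCommGroup E]
    [InnerProductSpace ℝ E] [CompleteSpace E] {s : Set E} {f : E → ℝ} {f' p q : E}
    (hf : ConvexOn ℝ s f) (hp : p ∈ s) (hq : q ∈ s) (hf' : HasGradientAt f f' p) :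
    f p + ⟪f', q - p⟫ ≤ f q := by
  let φ := f ∘ AffineMap.lineMap (k := ℝ) p q
  have hconv : ConvexOn ℝ (Set.Icc (0 : ℝ) 1) φ :=
    (hf.comp_affineMap _).subset (hf.1.mapsTo_lineMap hp hq) (convex_Icc 0 1)
  have hderiv : HasDerivAt φ ⟪f', q - p⟫ 0 := by
    have hfp : HasFDerivAt f (InnerProductSpace.toDual ℝ E f') (AffineMap.lineMap p q (0 : ℝ)) :=
      by simpa using hf'.hasFDerivAt
    simpa using hfp.comp_hasDerivAt (0 : ℝ) AffineMap.hasDerivAt_lineMap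
  have := hconv.le_slope_of_hasDerivAt (by simp) (by simp) one_pos hderiv
  simp only [φ, slope_def_field, Function.comp_apply, AffineMap.lineMap_apply_one,
    AffineMap.lineMap_apply_zero, sub_zero, div_one] at this
  linarith

section AugmentedLagrangian

variable {E F : Type*} [NormedAddCommGroup E] [InnerProductSpace ℝ E]
  [NormedAddCommGroup F] [InnerProductSpace ℝ F]
  (f g : E → ℝ) (A : E →L[ℝ] F) (b : F) (β : ℝ)

noncomputable def augLagrangian (x : E) (lam : F) : ℝ :=
  f x + ⟪lam, A x - b⟫ + β / 2 * ‖A x - b‖ ^ 2 + g x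

def IsApproxALSolution [CompleteSpace E] [CompleteSpace F] (f' : E → E) (lam : F) (η : ℝ)
    (xp : E) : Prop :=
  ∀ y, ⟪f' xp + A.adjoint (lam + β • (A xp - b)), xp - y⟫ + g xp - g y ≤ η

theorem augLagrangian_sub_augLagrangian (x : E) (μ ν : F) :
    augLagrangian f g A b β x μ - augLagrangian f g A b β x ν = ⟪μ - ν, A x - b⟫ := by
  rw [augLagrangian, augLagrangian, inner_sub_left]
  ring

variable {f g A b β} [CompleteSpace E] [CompleteSpace F] {f' : E → E} {lam : F} {η : ℝ}
  {xp : E}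

theorem IsApproxALSolution.augLagrangian_add_le (h : IsApproxALSolution g A b β f' lam η xp)
    (hf : ConvexOn ℝ Set.univ f) (hf' : HasGradientAt f (f' xp) xp) (y : E) :
    augLagrangian f g A b β xp lam + β / 2 * ‖A xp - A y‖ ^ 2
      ≤ augLagrangian f g A b β y lam + η := by
  have hfy := hf.add_inner_sub_le_of_hasGradientAt (Set.mem_univ xp) (Set.mem_univ y) hf'
  have hAxy : A xp - A y = (A xp - b) - (A y - b) := by abel
  have hadj : ⟪A.adjoint (lam + β • (A xp - b)), xp - y⟫
      = ⟪lam, A xp - b⟫ - ⟪lam, A y - b⟫ + β * (‖A xp - b‖ ^ 2 - ⟪A xp - b, A y - b⟫) := by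
    rw [ContinuousLinearMap.adjoint_inner_left, map_sub, hAxy]
    generalize A xp - b = w, A y - b = v
    rw [inner_add_left, inner_sub_right, inner_sub_right, real_inner_smul_left,
      real_inner_smul_left, real_inner_self_eq_norm_sq]
    ring
  have hVI := h y
  rw [inner_add_left, hadj, ← neg_sub y xp, inner_neg_right] at hVI
  rw [augLagrangian, augLagrangian, hAxy, norm_sub_sq_real (A xp - b)]
  linarith

theorem IsApproxALSolution.augLagrangian_add_sq_sub_le
    (h : IsApproxALSolution g A b β f' lam η xp) (hf : ConvexOn ℝ Set.univ f)
    (hf' : HasGradientAt f (f' xp) xp) (hβ : 0 ≤ β) (y : E) :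
    augLagrangian f g A b β xp lam + β / 2 * ‖A xp - b‖ ^ 2 - η
      ≤ augLagrangian f g A b β y (lam + β • (A xp - b)) := by
  have hle := h.augLagrangian_add_le hf hf' y
  have hshift := augLagrangian_sub_augLagrangian f g A b β y (lam + β • (A xp - b)) lam
  rw [add_sub_cancel_left, real_inner_smul_left] at hshift
  have hAxy : A xp - A y = (A xp - b) - (A y - b) := by abel
  rw [hAxy, norm_sub_sq_real] at hle
  have : 0 ≤ β / 2 * ‖A y - b‖ ^ 2 := by positivity
  linarith

variable {d : F → ℝ}

theorem IsApproxALSolution.dual_add_sq_sub_le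
    (hd : ∀ μ, IsLeast (Set.range fun x => augLagrangian f g A b β x μ) (d μ))
    (h : IsApproxALSolution g A b β f' lam η xp) (hf : ConvexOn ℝ Set.univ f)
    (hf' : HasGradientAt f (f' xp) xp) (hβ : 0 ≤ β) :
    d lam + β / 2 * ‖A xp - b‖ ^ 2 - η ≤ d (lam + β • (A xp - b)) := by
  obtain ⟨y, hy⟩ := (hd (lam + β • (A xp - b))).1
  rw [← hy]
  linarith [(hd lam).2 ⟨xp, rfl⟩, h.augLagrangian_add_sq_sub_le hf hf' hβ y]

theorem IsApproxALSolution.dual_le_dual_add_inner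
    (hd : ∀ μ, IsLeast (Set.range fun x => augLagrangian f g A b β x μ) (d μ))
    (h : IsApproxALSolution g A b β f' lam η xp) (hf : ConvexOn ℝ Set.univ f)
    (hf' : HasGradientAt f (f' xp) xp) (hβ : 0 ≤ β) (μ : F) :
    d μ ≤ d lam + η + ⟪μ - lam, A xp - b⟫ := by
  obtain ⟨y, hy⟩ := (hd lam).1
  have : 0 ≤ β / 2 * ‖A xp - A y‖ ^ 2 := by positivity
  linarith [hy, (hd μ).2 ⟨xp, rfl⟩, augLagrangian_sub_augLagrangian f g A b β xp μ lam,
    h.augLagrangian_add_le hf hf' y]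

theorem IsApproxALSolution.norm_update_sub_sq_le
    (hd : ∀ μ, IsLeast (Set.range fun x => augLagrangian f g A b β x μ) (d μ))
    (h : IsApproxALSolution g A b β f' lam η xp) (hf : ConvexOn ℝ Set.univ f)
    (hf' : HasGradientAt f (f' xp) xp) (hβ : 0 ≤ β) {lamstar : F}
    (hmax : ∀ μ, d μ ≤ d lamstar) :
    ‖lam + β • (A xp - b) - lamstar‖ ^ 2 ≤ ‖lam - lamstar‖ ^ 2 + 2 * β * η := by
  obtain ⟨y, hy⟩ := (hd (lam + β • (A xp - b))).1
  have hinner : β / 2 * ‖A xp - b‖ ^ 2 - η ≤ ⟪lamstar - lam, A xp - b⟫ := by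
    linarith [hy, hmax (lam + β • (A xp - b)), (hd lamstar).2 ⟨xp, rfl⟩,
      augLagrangian_sub_augLagrangian f g A b β xp lamstar lam,
      h.augLagrangian_add_sq_sub_le hf hf' hβ y]
  have hexp : ‖lam + β • (A xp - b) - lamstar‖ ^ 2
      = ‖lam - lamstar‖ ^ 2 - 2 * β * ⟪lamstar - lam, A xp - b⟫ + β ^ 2 * ‖A xp - b‖ ^ 2 := by
    rw [add_sub_right_comm, norm_add_sq_real, real_inner_smul_right, norm_smul, mul_pow,
      Real.norm_eq_abs, sq_abs, ← neg_sub lamstar lam, inner_neg_left]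
    ring
  rw [hexp]
  nlinarith

end AugmentedLagrangian

theorem le_add_tsum_of_le_add {u e : ℕ → ℝ} (he : ∀ k, 0 ≤ e k) (hs : Summable e)
    (hu : ∀ k, u (k + 1) ≤ u k + e k) (k : ℕ) : u k ≤ u 0 + ∑' j, e j := by
  have hpartial : ∀ k, u k ≤ u 0 + ∑ j ∈ Finset.range k, e j := by
    intro k
    induction k with
    | zero => simp
    | succ k ih => rw [Finset.sum_range_succ]; linarith [hu k]
  linarith [hpartial k, hs.sum_le_tsum (Finset.range k) fun j _ => he j]

theorem le_sub_mul_sq_add_of_descent {β B η s δ δ' : ℝ} (hβ : 0 < β) (hη : 0 ≤ η)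
    (hδ : 0 ≤ δ) (hηB : 2 * β * η ≤ B ^ 2) (hdesc : δ' ≤ δ - β / 2 * s ^ 2 + η)
    (hbound : δ ≤ B * s + η) :
    δ' ≤ δ - β / (4 * B ^ 2) * δ ^ 2 + 3 / 2 * η := by
  rcases eq_or_ne B 0 with rfl | hB
  -- `β / (4 * 0 ^ 2) = 0`, so the claim degenerates to `δ' ≤ δ + 3 / 2 * η`.
  · have : 0 ≤ β / 2 * s ^ 2 := by positivity
    rw [zero_pow two_ne_zero, mul_zero, div_zero, zero_mul, sub_zero]
    linarith
  have hB2 : 0 < B ^ 2 := by positivity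
  have hsq : δ ^ 2 ≤ 2 * B ^ 2 * s ^ 2 + 2 * η ^ 2 := by
    nlinarith [sq_nonneg (B * s - η)]
  have hθ : β / (4 * B ^ 2) * δ ^ 2 ≤ β / 2 * s ^ 2 + η / 2 := by
    rw [div_mul_eq_mul_div, div_le_iff₀ (by positivity)]
    nlinarith [mul_le_mul_of_nonneg_left hsq hβ.le, mul_le_mul_of_nonneg_right hηB hη]
  linarith

theorem ial_key_recursion_general
    {n m : ℕ}
    (A : EuclideanSpace ℝ (Fin n) →L[ℝ] EuclideanSpace ℝ (Fin m))
    (b : EuclideanSpace ℝ (Fin m))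
    (f g : EuclideanSpace ℝ (Fin n) → ℝ)
    (f' : EuclideanSpace ℝ (Fin n) → EuclideanSpace ℝ (Fin n))
    (hf : ConvexOn ℝ Set.univ f)
    (hf' : ∀ x, HasGradientAt f (f' x) x)
    (β : ℝ) (hβ : 0 < β)
    (L : EuclideanSpace ℝ (Fin n) → EuclideanSpace ℝ (Fin m) → ℝ)
    (hL : ∀ x lam, L x lam
        = f x + ⟪lam, A x - b⟫ + β / 2 * ‖A x - b‖ ^ 2 + g x)
    (d : EuclideanSpace ℝ (Fin m) → ℝ)
    (hd : ∀ lam, IsLeast (Set.range fun x => L x lam) (d lam))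
    (x : ℕ → EuclideanSpace ℝ (Fin n))
    (lam : ℕ → EuclideanSpace ℝ (Fin m))
    (η : ℕ → ℝ)
    (hη : ∀ k, 1 ≤ k → 0 ≤ η k)
    (hsum : Summable fun k : ℕ => η (k + 1))
    (happrox : ∀ k, 1 ≤ k → ∀ y,
        ⟪f' (x (k + 1)) + A.adjoint (lam k + β • (A (x (k + 1)) - b)), x (k + 1) - y⟫
          + g (x (k + 1)) - g y ≤ η k)
    (hlam : ∀ k, 1 ≤ k → lam (k + 1) = lam k + β • (A (x (k + 1)) - b))
    (lamstar : EuclideanSpace ℝ (Fin m))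
    (hstar : ∀ μ, d μ ≤ d lamstar)
    (δ : ℕ → ℝ)
    (hδ : ∀ k, δ k = d lamstar - d (lam k))
    (B : ℝ)
    (hB : B = Real.sqrt (‖lam 1 - lamstar‖ ^ 2 + 2 * β * ∑' k : ℕ, η (k + 1)))
    (θ : ℝ)
    (hθ : θ = β / (4 * B ^ 2))
    :
    ∀ k, 1 ≤ k → δ (k + 1) ≤ δ k - θ * δ k ^ 2 + 3 / 2 * η k := by
  obtain rfl : L = augLagrangian f g A b β := funext fun y => funext (hL y)
  have hsol : ∀ i, IsApproxALSolution g A b β f' (lam (i + 1)) (η (i + 1)) (x (i + 2)) :=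
    fun i => happrox (i + 1) (by omega)
  have hupdate : ∀ i, lam (i + 2) = lam (i + 1) + β • (A (x (i + 2)) - b) :=
    fun i => hlam (i + 1) (by omega)
  have hηnn : ∀ i, 0 ≤ 2 * β * η (i + 1) := fun i => by
    have := hη (i + 1) (by omega)
    positivity
  have hfejer : ∀ i, ‖lam (i + 1) - lamstar‖ ^ 2
      ≤ ‖lam 1 - lamstar‖ ^ 2 + ∑' l, 2 * β * η (l + 1) :=
    le_add_tsum_of_le_add hηnn (hsum.mul_left (2 * β)) fun i =>
      hupdate i ▸ (hsol i).norm_update_sub_sq_le hd hf (hf' _) hβ.le hstar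
  have hB2 : B ^ 2 = ‖lam 1 - lamstar‖ ^ 2 + ∑' l, 2 * β * η (l + 1) := by
    rw [hB, ← tsum_mul_left, Real.sq_sqrt (add_nonneg (sq_nonneg _) (tsum_nonneg hηnn))]
  intro k hk
  obtain ⟨j, rfl⟩ : ∃ j, k = j + 1 := ⟨k - 1, by omega⟩
  rw [hδ, hδ, hθ]
  refine le_sub_mul_sq_add_of_descent (s := ‖A (x (j + 2)) - b‖) hβ (hη _ hk)
    (sub_nonneg.2 (hstar _)) ?_ ?_ ?_
  · rw [hB2]
    linarith [(hsum.mul_left (2 * β)).le_tsum j fun i _ => hηnn i, sq_nonneg ‖lam 1 - lamstar‖]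
  · linarith [hupdate j ▸ (hsol j).dual_add_sq_sub_le hd hf (hf' _) hβ.le]
  · have hnorm : ‖lamstar - lam (j + 1)‖ ≤ B := by
      rw [norm_sub_rev]
      exact (pow_le_pow_iff_left₀ (norm_nonneg _) (hB ▸ Real.sqrt_nonneg _) two_ne_zero).1
        (hB2 ▸ hfejer j)
    have hcs := real_inner_le_norm (lamstar - lam (j + 1)) (A (x (j + 2)) - b)
    linarith [(hsol j).dual_le_dual_add_inner hd hf (hf' _) hβ.le lamstar,
      mul_le_mul_of_nonneg_right hnorm (norm_nonneg (A (x (j + 2)) - b))]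

/-- **Key recursion (26) (proof of Theorem 1).**
Suppose the nonnegative tolerance sequence `{η_k}` is summable and every AL subproblem
has an exact solution. Then for every `k ≥ 1`: `δ_{k+1} ≤ δ_k − θδ_k² + (3/2)η_k`. -/
theorem ial_key_recursion
    {n m : ℕ}
    (A : EuclideanSpace ℝ (Fin n) →L[ℝ] EuclideanSpace ℝ (Fin m))
    (b : EuclideanSpace ℝ (Fin m))
    (f g : EuclideanSpace ℝ (Fin n) → ℝ)
    (f' : EuclideanSpace ℝ (Fin n) → EuclideanSpace ℝ (Fin n))
    (hf : ConvexOn ℝ Set.univ f)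
    (hf' : ∀ x, HasGradientAt f (f' x) x)
    (hg : ConvexOn ℝ Set.univ g)
    (β : ℝ) (hβ : 0 < β)
    (L : EuclideanSpace ℝ (Fin n) → EuclideanSpace ℝ (Fin m) → ℝ)
    (hL : ∀ x lam, L x lam
        = f x + ⟪lam, A x - b⟫ + β / 2 * ‖A x - b‖ ^ 2 + g x)
    (d : EuclideanSpace ℝ (Fin m) → ℝ)
    (hd : ∀ lam, IsLeast (Set.range fun x => L x lam) (d lam))
    (x : ℕ → EuclideanSpace ℝ (Fin n))
    (lam : ℕ → EuclideanSpace ℝ (Fin m))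
    (η : ℕ → ℝ)
    (hη : ∀ k, 1 ≤ k → 0 ≤ η k)
    (hsum : Summable fun k : ℕ => η (k + 1))
    (hexact : ∀ lam₀ : EuclideanSpace ℝ (Fin m), ∃ xbar, ∀ y,
        ⟪f' xbar + A.adjoint (lam₀ + β • (A xbar - b)), xbar - y⟫ + g xbar - g y ≤ 0)
    (happrox : ∀ k, 1 ≤ k → ∀ y,
        ⟪f' (x (k + 1)) + A.adjoint (lam k + β • (A (x (k + 1)) - b)), x (k + 1) - y⟫
          + g (x (k + 1)) - g y ≤ η k)
    (hlam : ∀ k, 1 ≤ k → lam (k + 1) = lam k + β • (A (x (k + 1)) - b))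
    (lamstar : EuclideanSpace ℝ (Fin m))
    (hstar : ∀ μ, d μ ≤ d lamstar)
    (δ : ℕ → ℝ)
    (hδ : ∀ k, δ k = d lamstar - d (lam k))
    (B : ℝ)
    (hB : B = Real.sqrt (‖lam 1 - lamstar‖ ^ 2 + 2 * β * ∑' k : ℕ, η (k + 1)))
    (θ : ℝ)
    (hθ : θ = β / (4 * B ^ 2))
    :
    ∀ k, 1 ≤ k → δ (k + 1) ≤ δ k - θ * δ k ^ 2 + 3 / 2 * η k :=
  ial_key_recursion_general A b f g f' hf hf' β hβ L hL d hd x lam η hη hsum happrox hlam lamstar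
    hstar δ hδ B hB θ hθ
end

section
/- (Lemma 4) Let E > 0 and let {δ_k}_{k≥1} be a nonnegative real sequence satisfying (E/2)·δ_{k+1}² + δ_{k+1} ≤ δ_k for all k ≥ 1. Then δ_k ≤ max{δ₁, 4/E}/k for all k ≥ 1. -/
/-- **Lemma 4.**
Let `E > 0` and let `{δ_k}_{k≥1}` be a nonnegative real sequence satisfying
`(E/2)δ_{k+1}² + δ_{k+1} ≤ δ_k` for all `k ≥ 1`. Then
`δ_k ≤ max{δ₁, 4/E}/k` for all `k ≥ 1`. -/
theorem seq_quadratic_recursion_rate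
    (E : ℝ) (hE : 0 < E)
    (δ : ℕ → ℝ)
    (hδ : ∀ k, 1 ≤ k → 0 ≤ δ k)
    (hrec : ∀ k, 1 ≤ k → E / 2 * δ (k + 1) ^ 2 + δ (k + 1) ≤ δ k) :
    ∀ k, 1 ≤ k → δ k ≤ max (δ 1) (4 / E) / k := by
  set C := max (δ 1) (4 / E) with hC
  have h4E : 4 / E ≤ C := le_max_right _ _
  have hC0 : 0 < C := lt_of_lt_of_le (by positivity) h4E
  have hEC : 4 ≤ E * C := by
    rw [div_le_iff₀ hE] at h4E; nlinarith
  intro k hk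
  induction k with
  | zero => omega
  | succ n ih =>
    rcases Nat.lt_or_ge n 1 with h1 | h1
    · interval_cases n
      norm_num
      exact le_max_left (δ 1) (4 / E)
    · have ihn := ih h1
      by_contra hcon
      push_neg at hcon
      have hm : (1 : ℝ) ≤ (n : ℝ) := by exact_mod_cast h1
      have hm0 : (0 : ℝ) < (n : ℝ) := by linarith
      have hm1 : (0 : ℝ) < (n : ℝ) + 1 := by linarith
      set x := δ (n + 1) with hx
      have hx0 : 0 ≤ x := hδ _ (by omega)
      have hrecn := hrec n h1
      have h2 : δ n * n ≤ C := (le_div_iff₀ hm0).mp ihn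
      have h3 : C < x * ((n : ℝ) + 1) := by
        push_cast at hcon
        rw [div_lt_iff₀ hm1] at hcon
        linarith
      have hxpos : 0 < x := by nlinarith
      nlinarith [mul_le_mul_of_nonneg_right hrecn hm0.le, mul_pos hxpos hm0,
        mul_pos hxpos hxpos, mul_pos (mul_pos hxpos hxpos) hm0,
        mul_pos hE hxpos]
end

section
/- (Sequence kernel of Theorem 1) Let θ > 0, let {δ_k}_{k≥1} and {η_k}_{k≥1} be nonnegative real sequences with Σ_{k=1}^∞ η_k < +∞ and δ_{k+1} ≤ δ_k − θδ_k² + (3/2)η_k for all k ≥ 1. Then Σ_{k=1}^∞ δ_k² < +∞ and δ_k → 0 as k → ∞. -/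
open Filter Finset Topology

/- Telescoping the recursion gives `θ ∑_{k<n} δ_{k+1}² ≤ δ_1 - δ_{n+1} + (3/2) ∑_{k<n} η_{k+1}`; since
`δ_{n+1} ≥ 0` and the partial sums of the convergent series `∑ η_k` are bounded, the nonnegative series
`∑ δ_k²` has bounded partial sums, hence converges, and then `δ_k² → 0` forces `δ_k → 0`. -/

lemma summable_of_le_sub_add {a b c : ℕ → ℝ} (ha : ∀ n, 0 ≤ a n) (hc : ∀ n, 0 ≤ c n)
    (hb : Summable b) (hrec : ∀ n, a (n + 1) ≤ a n - c n + b n) : Summable c := by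
  obtain ⟨B, hB⟩ := hb.hasSum.tendsto_sum_nat.bddAbove_range
  refine summable_of_sum_range_le (c := a 0 + B) hc fun n => ?_
  have hstep : ∑ i ∈ range n, c i ≤ ∑ i ∈ range n, (a i - a (i + 1) + b i) :=
    sum_le_sum fun i _ => by linarith [hrec i]
  calc ∑ i ∈ range n, c i
      ≤ a 0 - a n + ∑ i ∈ range n, b i := by
        rwa [sum_add_distrib, sum_range_sub'] at hstep
    _ ≤ a 0 + B := by linarith [ha n, hB ⟨n, rfl⟩]

lemma tendsto_zero_of_tendsto_sq {α : Type*} {l : Filter α} {f : α → ℝ}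
    (h : Tendsto (fun x => f x ^ 2) l (𝓝 0)) : Tendsto f l (𝓝 0) := by
  have habs := h.sqrt
  simp only [Real.sqrt_sq_eq_abs, Real.sqrt_zero] at habs
  exact (tendsto_zero_iff_abs_tendsto_zero f).2 habs

theorem seq_kernel_global_convergence_general
    (θ : ℝ) (hθ : 0 < θ)
    (δ η : ℕ → ℝ)
    (hδ : ∀ k, 1 ≤ k → 0 ≤ δ k)
    (hsum : Summable fun k : ℕ => η (k + 1))
    (hrec : ∀ k, 1 ≤ k → δ (k + 1) ≤ δ k - θ * δ k ^ 2 + 3 / 2 * η k) :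
    (Summable fun k : ℕ => δ (k + 1) ^ 2)
      ∧ Tendsto δ atTop (nhds 0) := by
  have hsq : Summable fun k : ℕ => δ (k + 1) ^ 2 := by
    rw [← summable_mul_left_iff hθ.ne']
    exact summable_of_le_sub_add (fun n => hδ (n + 1) n.succ_pos) (fun n => by positivity)
      (hsum.mul_left (3 / 2)) (fun n => hrec (n + 1) n.succ_pos)
  exact ⟨hsq, (tendsto_add_atTop_iff_nat 1).mp (tendsto_zero_of_tendsto_sq hsq.tendsto_atTop_zero)⟩

/-- **Sequence kernel of Theorem 1.**
Let `θ > 0` and let `{δ_k}` and `{η_k}` be nonnegative sequences with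
`Σ_{k=1}^∞ η_k < ∞` and `δ_{k+1} ≤ δ_k − θδ_k² + (3/2)η_k` for all `k ≥ 1`.
Then `Σ_{k=1}^∞ δ_k² < ∞` and `δ_k → 0`. -/
theorem seq_kernel_global_convergence
    (θ : ℝ) (hθ : 0 < θ)
    (δ η : ℕ → ℝ)
    (hδ : ∀ k, 1 ≤ k → 0 ≤ δ k)
    (hη : ∀ k, 1 ≤ k → 0 ≤ η k)
    (hsum : Summable fun k : ℕ => η (k + 1))
    (hrec : ∀ k, 1 ≤ k → δ (k + 1) ≤ δ k - θ * δ k ^ 2 + 3 / 2 * η k) :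
    (Summable fun k : ℕ => δ (k + 1) ^ 2)
      ∧ Tendsto δ atTop (nhds 0) :=
  seq_kernel_global_convergence_general θ hθ δ η hδ hsum hrec
end

section
/- (Sequence kernel of Theorem 2) Let θ > 0, let {δ_k}_{k≥1} be a nonnegative real sequence and {η_k}_{k≥1} a positive nonincreasing real sequence with δ_{k+1} ≤ δ_k − θδ_k² + (3/2)η_k for all k ≥ 1. Let k₀ ≥ 4 be an integer such that δ_{k₀} ≤ 1/(2θ), η_{k₀} ≤ 1/(24θ), and √(η_{k+1}/η_k) ≥ (k−2)/k for all k ≥ k₀. Then for all k ≥ k₀: δ_k ≤ k₀/(4θk) + √(η_k)/(4θ√(η_{k₀})). -/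
set_option maxHeartbeats 2000000 in
/-- **Sequence kernel of Theorem 2.**
Let `θ > 0`, `{δ_k}` nonnegative, `{η_k}` positive nonincreasing, with
`δ_{k+1} ≤ δ_k − θδ_k² + (3/2)η_k` for all `k ≥ 1`. Let `k₀ ≥ 4` be such that
`δ_{k₀} ≤ 1/(2θ)`, `η_{k₀} ≤ 1/(24θ)`, and `√(η_{k+1}/η_k) ≥ (k−2)/k` for all
`k ≥ k₀`. Then for all `k ≥ k₀`: `δ_k ≤ k₀/(4θk) + √(η_k)/(4θ√(η_{k₀}))`. -/
theorem seq_kernel_nonergodic_rate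
    (θ : ℝ) (hθ : 0 < θ)
    (δ η : ℕ → ℝ)
    (hδ : ∀ k, 1 ≤ k → 0 ≤ δ k)
    (hηpos : ∀ k, 1 ≤ k → 0 < η k)
    (hηmono : ∀ k, 1 ≤ k → η (k + 1) ≤ η k)
    (hrec : ∀ k, 1 ≤ k → δ (k + 1) ≤ δ k - θ * δ k ^ 2 + 3 / 2 * η k)
    (k₀ : ℕ) (hk₀ : 4 ≤ k₀)
    (hδk₀ : δ k₀ ≤ 1 / (2 * θ))
    (hηk₀ : η k₀ ≤ 1 / (24 * θ))
    (hratio : ∀ k, k₀ ≤ k → ((k : ℝ) - 2) / k ≤ Real.sqrt (η (k + 1) / η k)) :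
    ∀ k, k₀ ≤ k →
      δ k ≤ k₀ / (4 * θ * k) + Real.sqrt (η k) / (4 * θ * Real.sqrt (η k₀)) := by
  have hk₀1 : 1 ≤ k₀ := le_trans (by norm_num) hk₀
  -- η is nonincreasing from k₀ on
  have hηle : ∀ k, k₀ ≤ k → η k ≤ η k₀ := by
    intro k hk
    induction k, hk using Nat.le_induction with
    | base => exact le_refl _
    | succ n hn ih => exact le_trans (hηmono n (le_trans hk₀1 hn)) ih
  intro k hk
  induction k, hk using Nat.le_induction with
  | base =>
      have hs0 : Real.sqrt (η k₀) > 0 := Real.sqrt_pos.mpr (hηpos k₀ hk₀1)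
      have hk0r : (0 : ℝ) < (k₀ : ℝ) := by positivity
      have h1 : Real.sqrt (η k₀) / (4 * θ * Real.sqrt (η k₀)) = 1 / (4 * θ) := by
        field_simp
      have h2 : (k₀ : ℝ) / (4 * θ * k₀) = 1 / (4 * θ) := by
        field_simp
      rw [h1, h2]
      calc δ k₀ ≤ 1 / (2 * θ) := hδk₀
        _ = 1 / (4 * θ) + 1 / (4 * θ) := by field_simp; ring
  | succ k hk ih =>
      have hk1 : 1 ≤ k := le_trans hk₀1 hk
      have hkr : (4 : ℝ) ≤ (k : ℝ) := by exact_mod_cast le_trans hk₀ hk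
      have hk0r : (4 : ℝ) ≤ (k₀ : ℝ) := by exact_mod_cast hk₀
      have hk0k : (k₀ : ℝ) ≤ (k : ℝ) := by exact_mod_cast hk
      have hkpos : (0 : ℝ) < k := by linarith
      push_cast
      set sk := Real.sqrt (η k) with hsk
      set sk1 := Real.sqrt (η (k + 1)) with hsk1
      set s0 := Real.sqrt (η k₀) with hs0
      have hskpos : 0 < sk := Real.sqrt_pos.mpr (hηpos k hk1)
      have hsk1pos : 0 < sk1 := Real.sqrt_pos.mpr (hηpos (k + 1) (le_trans hk1 (Nat.le_succ k)))
      have hs0pos : 0 < s0 := Real.sqrt_pos.mpr (hηpos k₀ hk₀1)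
      have esk : sk ^ 2 = η k := Real.sq_sqrt (le_of_lt (hηpos k hk1))
      have esk1 : sk1 ^ 2 = η (k + 1) :=
        Real.sq_sqrt (le_of_lt (hηpos (k + 1) (le_trans hk1 (Nat.le_succ k))))
      have es0 : s0 ^ 2 = η k₀ := Real.sq_sqrt (le_of_lt (hηpos k₀ hk₀1))
      have hsk_le : sk ≤ s0 := Real.sqrt_le_sqrt (hηle k hk)
      -- ratio inequality: (k-2) * sk ≤ k * sk1
      have hrat : ((k : ℝ) - 2) * sk ≤ (k : ℝ) * sk1 := by
        have h := hratio k hk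
        rw [Real.sqrt_div (le_of_lt (hηpos (k + 1) (le_trans hk1 (Nat.le_succ k))))] at h
        rw [← hsk, ← hsk1] at h
        rw [div_le_div_iff₀ hkpos hskpos] at h
        linarith
      -- abbreviations
      set a := (k₀ : ℝ) / (4 * θ * k) with ha
      set b := sk / (4 * θ * s0) with hb
      set a' := (k₀ : ℝ) / (4 * θ * ((k : ℝ) + 1)) with ha'
      set b' := sk1 / (4 * θ * s0) with hb'
      have hapos : 0 < a := by positivity
      have hbpos : 0 < b := by positivity
      have haq : a ≤ 1 / (4 * θ) := by
        rw [ha, div_le_div_iff₀ (by positivity) (by positivity)]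
        nlinarith
      have hbq : b ≤ 1 / (4 * θ) := by
        rw [hb, div_le_div_iff₀ (by positivity) (by positivity)]
        nlinarith
      have hB : δ k ≤ a + b := ih
      have hB2 : a + b ≤ 1 / (2 * θ) := by
        have h : 1 / (4 * θ) + 1 / (4 * θ) = 1 / (2 * θ) := by field_simp; ring
        linarith
      have hδk : 0 ≤ δ k := hδ k hk1
      -- monotonicity of x - θ x² on [0, 1/(2θ)]
      have hf : δ k - θ * δ k ^ 2 ≤ (a + b) - θ * (a + b) ^ 2 := by
        have key : 0 ≤ ((a + b) - δ k) * (1 - θ * (δ k + (a + b))) := by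
          apply mul_nonneg (by linarith)
          have h2 : θ * (δ k + (a + b)) ≤ θ * (1 / (2 * θ) + 1 / (2 * θ)) :=
            mul_le_mul_of_nonneg_left (by linarith) (le_of_lt hθ)
          have h3 : θ * (1 / (2 * θ) + 1 / (2 * θ)) = 1 := by field_simp; ring
          linarith
        nlinarith [key]
      -- three pieces
      have h24 : 24 * θ * η k₀ ≤ 1 := by
        have := (le_div_iff₀ (by positivity : (0:ℝ) < 24 * θ)).mp hηk₀
        linarith
      have h1 : a - θ * a ^ 2 ≤ a' := by
        have key : (a - θ * a ^ 2) * (16 * θ * (k : ℝ) ^ 2 * ((k : ℝ) + 1))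
            ≤ a' * (16 * θ * (k : ℝ) ^ 2 * ((k : ℝ) + 1)) := by
          have e1 : (a - θ * a ^ 2) * (16 * θ * (k : ℝ) ^ 2 * ((k : ℝ) + 1))
              = (4 * k₀ * k - (k₀ : ℝ) ^ 2) * ((k : ℝ) + 1) := by
            rw [ha]; field_simp; ring
          have e2 : a' * (16 * θ * (k : ℝ) ^ 2 * ((k : ℝ) + 1)) = 4 * k₀ * (k : ℝ) ^ 2 := by
            rw [ha']; field_simp; ring
          rw [e1, e2]
          nlinarith [mul_nonneg (by linarith : (0:ℝ) ≤ (k₀:ℝ) - 4) hkpos.le, hk0r, hkpos]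
        exact le_of_mul_le_mul_right key (by positivity)
      have h2 : b - b' ≤ 2 * θ * (a * b) := by
        have key : (b - b') * (8 * θ * (k : ℝ) * s0)
            ≤ (2 * θ * (a * b)) * (8 * θ * (k : ℝ) * s0) := by
          have e1 : (b - b') * (8 * θ * (k : ℝ) * s0) = 2 * k * sk - 2 * k * sk1 := by
            rw [hb, hb']; field_simp; ring
          have e2 : (2 * θ * (a * b)) * (8 * θ * (k : ℝ) * s0) = k₀ * sk := by
            rw [ha, hb]; field_simp; ring
          rw [e1, e2]
          nlinarith [hrat, hskpos.le, hk0r]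
        exact le_of_mul_le_mul_right key (by positivity)
      have h3 : 3 / 2 * η k ≤ θ * b ^ 2 := by
        have key : (3 / 2 * η k) * (16 * θ * s0 ^ 2) ≤ (θ * b ^ 2) * (16 * θ * s0 ^ 2) := by
          have e1 : (3 / 2 * η k) * (16 * θ * s0 ^ 2) = 24 * θ * η k₀ * η k := by
            rw [es0]; ring
          have e2 : (θ * b ^ 2) * (16 * θ * s0 ^ 2) = η k := by
            rw [hb]; field_simp; rw [esk]; ring
          rw [e1, e2]
          nlinarith [h24, (hηpos k hk1).le]
        exact le_of_mul_le_mul_right key (by positivity)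
      calc δ (k + 1) ≤ δ k - θ * δ k ^ 2 + 3 / 2 * η k := hrec k hk1
        _ ≤ (a + b) - θ * (a + b) ^ 2 + 3 / 2 * η k := by linarith
        _ ≤ a' + b' := by nlinarith [h1, h2, h3]
end

section
/- (Sequence kernel of Theorem 3) Let θ > 0, σ > 0, α ∈ (1/2, 1], and let {δ_k}_{k≥1} be a nonnegative real sequence satisfying δ_{k+1} ≤ δ_k − θδ_k² + (3/2)·σ/k^{2α} for all k ≥ 1. Then for all k ≥ 1: δ_k ≤ C/k^α, where C := 4√(3((3/2)θσ + 1)σ/θ) + (4/3)·max{δ₁, 4/θ}. -/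
/-! Induction on `k`, with `p = k^α` and `r = (k+1)^α ≤ p + 1`. Write `f(x) = x - θx²`.
If `C/p ≤ 1/(2θ)`, `f` is increasing on `(-∞, C/p]`, so `δ_{k+1} ≤ f(C/p) + (3/2)σ/p²`,
and the condition `2C + 3σ ≤ θC²` makes this at most `C/p - C/p² ≤ C/r`. Otherwise only the global
bound `f ≤ 1/(4θ)` is used: it is absorbed by `C/p - C/p²` when `θC < p`, and by
`C/(2p) ≤ C/r` when `p ≤ θC`. The choice of `C` gives `C ≥ 6σ` and `θC ≥ 16/3`, hence
`2C + 3σ ≤ θC²`. -/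

theorem sub_mul_sq_le_inv_four_mul {θ : ℝ} (hθ : 0 < θ) (x : ℝ) :
    x - θ * x ^ 2 ≤ 1 / (4 * θ) := by
  rw [le_div_iff₀ (by positivity)]
  nlinarith [sq_nonneg (2 * θ * x - 1)]

theorem sub_mul_sq_le_sub_mul_sq {θ x c : ℝ} (hxc : x ≤ c) (h : θ * (x + c) ≤ 1) :
    x - θ * x ^ 2 ≤ c - θ * c ^ 2 := by
  nlinarith [mul_nonneg (sub_nonneg.2 hxc) (sub_nonneg.2 h)]

theorem div_sub_div_sq_le_div {C p r : ℝ} (hC : 0 ≤ C) (hp : 1 ≤ p) (hr : 0 < r)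
    (hrp : r ≤ p + 1) : C / p - C / p ^ 2 ≤ C / r := by
  have hp0 : 0 < p := by linarith
  rw [show C / p - C / p ^ 2 = C * (p - 1) / p ^ 2 by field_simp,
    div_le_div_iff₀ (by positivity) hr]
  nlinarith [mul_le_mul_of_nonneg_left hrp (mul_nonneg hC (by linarith : (0 : ℝ) ≤ p - 1))]

section Step

variable {θ σ C p : ℝ}

theorem inv_four_mul_add_le_div_sub_div_sq (hθ : 0 < θ) (hC : 0 ≤ C)
    (hθC : 2 * C + 3 * σ ≤ θ * C ^ 2) (hp_lt : θ * C < p) (hp_le : p ≤ 2 * θ * C) :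
    1 / (4 * θ) + 3 / 2 * (σ / p ^ 2) ≤ C / p - C / p ^ 2 := by
  have hp0 : 0 < p := lt_of_le_of_lt (by positivity) hp_lt
  have hCp : θ * C ^ 2 ≤ C * p := by nlinarith [mul_le_mul_of_nonneg_left hp_lt.le hC]
  rw [show 1 / (4 * θ) + 3 / 2 * (σ / p ^ 2) = (p ^ 2 + 6 * θ * σ) / (4 * θ * p ^ 2) by
      field_simp; ring,
    show C / p - C / p ^ 2 = (C * p - C) / p ^ 2 by field_simp,
    div_le_div_iff₀ (by positivity) (by positivity)]
  have hsq : p ^ 2 ≤ 2 * θ * C * p := by nlinarith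
  nlinarith [mul_le_mul_of_nonneg_right hsq (sq_nonneg p), mul_pos hθ (pow_pos hp0 2)]

theorem inv_four_mul_add_le_div_two_mul (hθ : 0 < θ) (hσC : 6 * σ ≤ C) (hp : 1 ≤ p)
    (hp_le : p ≤ θ * C) : 1 / (4 * θ) + 3 / 2 * (σ / p ^ 2) ≤ C / (2 * p) := by
  have hp0 : 0 < p := by linarith
  rw [show 1 / (4 * θ) + 3 / 2 * (σ / p ^ 2) = (p ^ 2 + 6 * θ * σ) / (4 * θ * p ^ 2) by
      field_simp; ring,
    div_le_div_iff₀ (by positivity) (by positivity)]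
  have hsq : p ^ 2 ≤ θ * C * p := by nlinarith
  have hσθ : 6 * θ * σ ≤ θ * C * p := by nlinarith
  nlinarith [mul_pos hθ hp0]

variable {r x y : ℝ}

theorem le_div_of_le_sub_mul_sq_add (hθ : 0 < θ) (hσ : 0 ≤ σ) (hσC : 6 * σ ≤ C)
    (hθC : 2 * C + 3 * σ ≤ θ * C ^ 2) (hp : 1 ≤ p) (hr : 0 < r) (hrp : r ≤ p + 1)
    (hx : x ≤ C / p) (hy : y ≤ x - θ * x ^ 2 + 3 / 2 * (σ / p ^ 2)) : y ≤ C / r := by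
  have hp0 : 0 < p := by linarith
  have hC : 0 ≤ C := by linarith
  have hsub := div_sub_div_sq_le_div hC hp hr hrp
  rcases le_or_gt (2 * θ * C) p with hp_ge | hp_lt
  · have hθx : θ * (x + C / p) ≤ 1 := by
      have : θ * (C / p) ≤ 1 / 2 := by
        rw [← mul_div_assoc, div_le_iff₀ hp0]; linarith
      nlinarith [mul_le_mul_of_nonneg_left hx hθ.le]
    have hgap : 3 / 2 * (σ / p ^ 2) - θ * (C / p) ^ 2 ≤ - (C / p ^ 2) := by
      rw [div_pow, ← mul_div_assoc, ← mul_div_assoc, div_sub_div_same, ← neg_div,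
        div_le_div_iff_of_pos_right (by positivity)]
      linarith
    linarith [sub_mul_sq_le_sub_mul_sq hx hθx]
  have hf := sub_mul_sq_le_inv_four_mul hθ x
  rcases lt_or_ge (θ * C) p with hp_gt | hp_le
  · linarith [inv_four_mul_add_le_div_sub_div_sq hθ hC hθC hp_gt hp_lt.le]
  · have h2p : C / (2 * p) ≤ C / r := div_le_div_of_nonneg_left hC hr (by linarith)
    linarith [inv_four_mul_add_le_div_two_mul hθ hσC hp hp_le]

end Step

theorem seq_kernel_dual_rate_general
    (θ σ α : ℝ) (hθ : 0 < θ) (hσ : 0 < σ) (hα : 1 / 2 < α ∧ α ≤ 1)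
    (δ : ℕ → ℝ)
    (hrec : ∀ k, 1 ≤ k →
        δ (k + 1) ≤ δ k - θ * δ k ^ 2 + 3 / 2 * (σ / (k : ℝ) ^ (2 * α)))
    (C : ℝ)
    (hC : C = 4 * Real.sqrt (3 * (3 / 2 * θ * σ + 1) * σ / θ)
        + 4 / 3 * max (δ 1) (4 / θ)) :
    ∀ k, 1 ≤ k → δ k ≤ C / (k : ℝ) ^ α := by
  have hsqrt : 3 / 2 * σ ≤ Real.sqrt (3 * (3 / 2 * θ * σ + 1) * σ / θ) :=
    (Real.le_sqrt (by positivity) (by positivity)).2 <| by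
      rw [le_div_iff₀ hθ]; nlinarith [mul_pos hθ hσ]
  have hmax : 4 / θ ≤ max (δ 1) (4 / θ) := le_max_right _ _
  have hσC : 6 * σ ≤ C := by rw [hC]; linarith [div_pos four_pos hθ]
  have hθC : 16 / 3 ≤ θ * C := by
    have : θ * (4 / θ) = 4 := by field_simp
    rw [hC]; nlinarith [Real.sqrt_nonneg (3 * (3 / 2 * θ * σ + 1) * σ / θ)]
  have hθC2 : 2 * C + 3 * σ ≤ θ * C ^ 2 := by nlinarith
  intro k hk
  induction k, hk using Nat.le_induction with
  | base =>
    rw [Nat.cast_one, Real.one_rpow, div_one, hC]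
    linarith [le_max_left (δ 1) (4 / θ), Real.sqrt_nonneg (3 * (3 / 2 * θ * σ + 1) * σ / θ)]
  | succ k hk ih =>
    have hk1 : (1 : ℝ) ≤ k := by exact_mod_cast hk
    have hsq : (k : ℝ) ^ (2 * α) = ((k : ℝ) ^ α) ^ 2 := by
      rw [mul_comm, ← Real.rpow_mul_natCast (by positivity)]; norm_num
    have hsucc : ((k + 1 : ℕ) : ℝ) ^ α ≤ (k : ℝ) ^ α + 1 := by
      simpa using Real.rpow_add_le_add_rpow (k.cast_nonneg) zero_le_one (by linarith) hα.2
    refine le_div_of_le_sub_mul_sq_add hθ hσ.le hσC hθC2 (Real.one_le_rpow hk1 (by linarith))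
      (by positivity) hsucc ih ?_
    simpa [hsq] using hrec k hk

/-- **Sequence kernel of Theorem 3.**
Let `θ > 0`, `σ > 0`, `α ∈ (1/2, 1]`, and `{δ_k}` nonnegative with
`δ_{k+1} ≤ δ_k − θδ_k² + (3/2)σ/k^{2α}` for all `k ≥ 1`. Then for all `k ≥ 1`:
`δ_k ≤ C/k^α`, where `C := 4√(3((3/2)θσ + 1)σ/θ) + (4/3)max{δ₁, 4/θ}`. -/
theorem seq_kernel_dual_rate
    (θ σ α : ℝ) (hθ : 0 < θ) (hσ : 0 < σ) (hα : 1 / 2 < α ∧ α ≤ 1)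
    (δ : ℕ → ℝ)
    (hδ : ∀ k, 1 ≤ k → 0 ≤ δ k)
    (hrec : ∀ k, 1 ≤ k →
        δ (k + 1) ≤ δ k - θ * δ k ^ 2 + 3 / 2 * (σ / (k : ℝ) ^ (2 * α)))
    (C : ℝ)
    (hC : C = 4 * Real.sqrt (3 * (3 / 2 * θ * σ + 1) * σ / θ)
        + 4 / 3 * max (δ 1) (4 / θ)) :
    ∀ k, 1 ≤ k → δ k ≤ C / (k : ℝ) ^ α :=
  seq_kernel_dual_rate_general θ σ α hθ hσ hα δ hrec C hC
end

section
/- (Inequality (31), proof of Theorem 3) Let θ > 0 and σ > 0, and let {δ_k}_{k≥1} and {η_k}_{k≥1} be nonnegative real sequences such that δ_{k+1} ≤ δ_k − θδ_k² + (3/2)η_k and η_k² ≤ ση_k for all k ≥ 1. Then for all k ≥ 1: (θ/2)·δ_{k+1}² + δ_{k+1} ≤ δ_k + (3/2)·((3θσ/2) + 1)·η_k. -/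
/-- **Inequality (31) (proof of Theorem 3).**
Let `θ > 0`, `σ > 0`, and let `{δ_k}`, `{η_k}` be nonnegative sequences with
`δ_{k+1} ≤ δ_k − θδ_k² + (3/2)η_k` and `η_k² ≤ ση_k` for all `k ≥ 1`. Then for all
`k ≥ 1`: `(θ/2)δ_{k+1}² + δ_{k+1} ≤ δ_k + (3/2)((3θσ/2) + 1)η_k`. -/
theorem seq_inequality_31
    (θ σ : ℝ) (hθ : 0 < θ) (hσ : 0 < σ)
    (δ η : ℕ → ℝ)
    (hδ : ∀ k, 1 ≤ k → 0 ≤ δ k)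
    (hη : ∀ k, 1 ≤ k → 0 ≤ η k)
    (hrec : ∀ k, 1 ≤ k → δ (k + 1) ≤ δ k - θ * δ k ^ 2 + 3 / 2 * η k)
    (hη2 : ∀ k, 1 ≤ k → η k ^ 2 ≤ σ * η k) :
    ∀ k, 1 ≤ k →
      θ / 2 * δ (k + 1) ^ 2 + δ (k + 1) ≤ δ k + 3 / 2 * (3 * θ * σ / 2 + 1) * η k := by
  intro k hk
  have h1 := hδ k hk
  have h2 := hη k hk
  have h3 := hrec k hk
  have h4 := hη2 k hk
  have h5 : 0 ≤ δ (k + 1) := hδ (k + 1) (by omega)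
  have h6 : δ (k + 1) ≤ δ k + 3 / 2 * η k := by nlinarith [sq_nonneg (δ k)]
  have h7 : δ (k + 1) ^ 2 ≤ (δ k + 3 / 2 * η k) ^ 2 := by
    apply pow_le_pow_left₀ h5 h6
  nlinarith [sq_nonneg (2 * δ k - 3 * η k), mul_le_mul_of_nonneg_left h7 (le_of_lt (half_pos hθ)), mul_le_mul_of_nonneg_left h4 hθ.le]
end
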